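/- Let R be a commutative ring, C the category of R-modules (as a stand-in for a stable symmetric monoidal category), and let F : C → D be an R-linear exact functor to an R-linear abelian category that preserves small colimits. Suppose S is a set of compact generators of C such that every object of S is strongly dualizable, and suppose that for all P ∈ S and all X in C the map Hom_C(1, Hom(P, X)) → Hom_D(F 1, F Hom(P, X)) induced by F is a bijection, where 1 = R is the monoidal unit and Hom denotes internal hom. If F is monoidal and preserves internal homs from objects of S, then F is fully faithful on the full subcategory generated by S under finite colimits. -/

import Mathlib

open CategoryTheory CategoryTheory.Limits MonoidalCategory Opposite

universe w v u

/-- The closure of a set of objects of `ModuleCat R` under finite colimits. -/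
inductive FinColimClosure {R : Type u} [CommRing R] (S : Set (ModuleCat R)) :
    ModuleCat R → Prop
  | of (P : ModuleCat R) : P ∈ S → FinColimClosure S P
  | colim (J : Type) [SmallCategory J] [FinCategory J] (K : J ⥤ ModuleCat R)
      (c : Cocone K) : IsColimit c → (∀ j : J, FinColimClosure S (K.obj j)) →
      FinColimClosure S c.pt

section Aux

open Functor.LaxMonoidal Functor.OplaxMonoidal

variable {C : Type*} {D : Type*} [Category C] [Category D] [MonoidalCategory C]
  [MonoidalCategory D] (F : C ⥤ D) [F.Monoidal]

/-- A monoidal functor sends an exact pairing to an exact pairing. -/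
noncomputable def Stmt14.exactPairingMap (X Y : C) [ExactPairing X Y] :
    ExactPairing (F.obj X) (F.obj Y) where
  coevaluation' := ε F ≫ F.map (η_ X Y) ≫ δ F X Y
  evaluation' := μ F Y X ≫ F.map (ε_ X Y) ≫ η F
  coevaluation_evaluation' := by
    calc
      _ = F.obj Y ◁ ε F ≫ (F.obj Y ◁ F.map (η_ X Y) ≫ μ F Y (X ⊗ Y)) ≫
          (δ F Y (X ⊗ Y) ≫ F.obj Y ◁ δ F X Y ≫ (α_ _ _ _).inv) ≫ μ F Y X ▷ F.obj Y ≫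
          F.map (ε_ X Y) ▷ F.obj Y ≫ η F ▷ F.obj Y := by
        simp only [MonoidalCategory.whiskerLeft_comp, comp_whiskerRight, Category.assoc,
          Functor.Monoidal.μ_δ_assoc]
      _ = F.obj Y ◁ ε F ≫ μ F Y (𝟙_ C) ≫
          F.map (Y ◁ η_ X Y ≫ (α_ Y X Y).inv ≫ ε_ X Y ▷ Y) ≫
          δ F (𝟙_ C) Y ≫ η F ▷ F.obj Y := by
        rw [_root_.CategoryTheory.Functor.OplaxMonoidal.associativity_inv, μ_natural_right]
        simp only [Category.assoc, Functor.Monoidal.whiskerRight_δ_μ_assoc, F.map_comp,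
          Functor.OplaxMonoidal.δ_natural_left_assoc]
      _ = (ρ_ (F.obj Y)).hom ≫ (λ_ (F.obj Y)).inv := by
        rw [ExactPairing.coevaluation_evaluation, F.map_comp]
        simp only [Category.assoc]
        rw [← Functor.LaxMonoidal.right_unitality_assoc,
          ← _root_.CategoryTheory.Functor.OplaxMonoidal.left_unitality]
  evaluation_coevaluation' := by
    calc
      _ = ε F ▷ F.obj X ≫ (F.map (η_ X Y) ▷ F.obj X ≫ μ F (X ⊗ Y) X) ≫
          (δ F (X ⊗ Y) X ≫ δ F X Y ▷ F.obj X ≫ (α_ _ _ _).hom) ≫ F.obj X ◁ μ F Y X ≫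
          F.obj X ◁ F.map (ε_ X Y) ≫ F.obj X ◁ η F := by
        simp only [MonoidalCategory.whiskerLeft_comp, comp_whiskerRight, Category.assoc,
          Functor.Monoidal.μ_δ_assoc]
      _ = ε F ▷ F.obj X ≫ μ F (𝟙_ C) X ≫
          F.map (η_ X Y ▷ X ≫ (α_ X Y X).hom ≫ X ◁ ε_ X Y) ≫
          δ F X (𝟙_ C) ≫ F.obj X ◁ η F := by
        rw [_root_.CategoryTheory.Functor.OplaxMonoidal.associativity, μ_natural_left]
        simp only [Category.assoc, Functor.Monoidal.whiskerLeft_δ_μ_assoc, F.map_comp,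
          Functor.OplaxMonoidal.δ_natural_right_assoc]
      _ = (λ_ (F.obj X)).hom ≫ (ρ_ (F.obj X)).inv := by
        rw [ExactPairing.evaluation_coevaluation, F.map_comp]
        simp only [Category.assoc]
        rw [← Functor.LaxMonoidal.left_unitality_assoc,
          ← _root_.CategoryTheory.Functor.OplaxMonoidal.right_unitality]

/-- In a braided category, an exact pairing `(P, Q)` makes `X ↦ X ⊗ Q` a right adjoint
of `tensorLeft P`. -/
noncomputable def Stmt14.tensorLeftAdjTensorRight {C : Type*} [Category C] [MonoidalCategory C]
    [BraidedCategory C] (P Q : C) [ExactPairing P Q] :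
    MonoidalCategory.tensorLeft P ⊣ MonoidalCategory.tensorRight Q :=
  (tensorRightAdjunction P Q).ofNatIsoLeft
    (NatIso.ofComponents (fun X => β_ X P) (by intros; simp))

/-- In a symmetric monoidal closed category, `ihom P` is isomorphic to `- ⊗ Q` whenever
`(P, Q)` is an exact pairing. -/
noncomputable def Stmt14.ihomIsoTensor {C : Type*} [Category C] [MonoidalCategory C]
    [SymmetricCategory C] [MonoidalClosed C] (P Q : C) [ExactPairing P Q] :
    ihom P ≅ MonoidalCategory.tensorRight Q :=
  (ihom.adjunction P).rightAdjointUniq (Stmt14.tensorLeftAdjTensorRight P Q)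

lemma Stmt14.tensorRightHomEquiv_leftUnitor {P Q Y : C} [ExactPairing P Q] (f : P ⟶ Y) :
    (tensorRightHomEquiv (𝟙_ C) P Q Y) ((λ_ P).hom ≫ f) = η_ P Q ≫ f ▷ Q := by
  rw [Equiv.apply_eq_iff_eq_symm_apply, tensorRightHomEquiv_symm_coevaluation_comp_whiskerRight]

/-- The key reduction: if `F` is bijective on morphisms `𝟙_ C ⟶ W` for some `W ≅ Y ⊗ Q`,
where `(P, Q)` is an exact pairing, then `F` is bijective on morphisms `P ⟶ Y`. -/
lemma Stmt14.bij_of_unit (P Q : C) [ExactPairing P Q] (Y W : C) (e : W ≅ Y ⊗ Q)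
    (h1 : Function.Bijective (fun f : (𝟙_ C ⟶ W) => F.map f)) :
    Function.Bijective (fun f : (P ⟶ Y) => F.map f) := by
  letI : ExactPairing (F.obj P) (F.obj Q) := Stmt14.exactPairingMap F P Q
  let eC : (P ⟶ Y) ≃ (𝟙_ C ⟶ Y ⊗ Q) :=
    (Iso.homCongr (λ_ P) (Iso.refl Y)).symm.trans (tensorRightHomEquiv (𝟙_ C) P Q Y)
  let eD : (F.obj P ⟶ F.obj Y) ≃ (𝟙_ D ⟶ F.obj Y ⊗ F.obj Q) :=
    (Iso.homCongr (λ_ (F.obj P)) (Iso.refl (F.obj Y))).symm.trans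
      (tensorRightHomEquiv (𝟙_ D) (F.obj P) (F.obj Q) (F.obj Y))
  let gD : (𝟙_ D ⟶ F.obj Y ⊗ F.obj Q) ≃ (F.obj (𝟙_ C) ⟶ F.obj (Y ⊗ Q)) :=
    Iso.homCongr (Functor.Monoidal.εIso F) (Functor.Monoidal.μIso F Y Q)
  let bC : (P ⟶ Y) ≃ (𝟙_ C ⟶ W) := eC.trans (Iso.homCongr (Iso.refl _) e.symm)
  let bD : (F.obj P ⟶ F.obj Y) ≃ (F.obj (𝟙_ C) ⟶ F.obj W) :=
    (eD.trans gD).trans (Iso.homCongr (Iso.refl _) (F.mapIso e.symm))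
  have heC : ∀ f : P ⟶ Y, eC f = η_ P Q ≫ f ▷ Q := by
    intro f
    have h0 : eC f = (tensorRightHomEquiv (𝟙_ C) P Q Y) ((λ_ P).hom ≫ f) := by
      simp [eC, Iso.homCongr]
    rw [h0, Stmt14.tensorRightHomEquiv_leftUnitor]
  have heD : ∀ h : F.obj P ⟶ F.obj Y,
      eD h = η_ (F.obj P) (F.obj Q) ≫ h ▷ F.obj Q := by
    intro h
    have h0 : eD h =
        (tensorRightHomEquiv (𝟙_ D) (F.obj P) (F.obj Q) (F.obj Y)) ((λ_ (F.obj P)).hom ≫ h) := by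
      simp [eD, Iso.homCongr]
    rw [h0, Stmt14.tensorRightHomEquiv_leftUnitor]
  have hcoev : η_ (F.obj P) (F.obj Q) = ε F ≫ F.map (η_ P Q) ≫ δ F P Q := rfl
  have core : ∀ f : P ⟶ Y, gD (eD (F.map f)) = F.map (eC f) := by
    intro f
    rw [heD, heC]
    show (Functor.Monoidal.εIso F).inv ≫ (η_ (F.obj P) (F.obj Q) ≫ F.map f ▷ F.obj Q) ≫
      (Functor.Monoidal.μIso F Y Q).hom = F.map (η_ P Q ≫ f ▷ Q)
    rw [hcoev]
    simp
  have main : ∀ f : P ⟶ Y, bD (F.map f) = F.map (bC f) := by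
    intro f
    simp only [bD, bC, Equiv.trans_apply, Iso.homCongr_apply, Iso.refl_inv, Iso.symm_hom,
      Functor.mapIso_hom, Functor.mapIso_symm, Category.id_comp]
    rw [core, F.map_comp]
    simp
  have hfun : (fun f : (P ⟶ Y) => F.map f) =
      (bD.symm ∘ (fun g : (𝟙_ C ⟶ W) => F.map g)) ∘ bC := by
    funext f
    show F.map f = bD.symm (F.map (bC f))
    rw [← main, Equiv.symm_apply_apply]
  rw [hfun]
  exact (bD.symm.bijective.comp h1).comp bC.bijective

end Aux

/-- Let `F` be an `R`-linear, exact, colimit-preserving monoidal functor from `ModuleCat R`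
to an `R`-linear abelian monoidal closed category, and `S` a set of compact, strongly
dualizable separating objects.  If `F` preserves internal homs from objects of `S` and
induces bijections `Hom(1, [P, X]) → Hom(F1, F[P, X])` for all `P ∈ S`, then `F` is fully
faithful on the full subcategory generated by `S` under finite colimits. -/
theorem stmt14 {R : Type u} [CommRing R] {D : Type v} [Category.{w} D]
    [Abelian D] [Linear R D] [MonoidalCategory D] [MonoidalClosed D]
    (F : ModuleCat R ⥤ D) [F.Monoidal] [F.Additive] [F.Linear R]
    [PreservesFiniteLimits F] [PreservesColimits F]
    (S : Set (ModuleCat R))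
    (hgen : ObjectProperty.IsSeparating S)
    (hcompact : ∀ P ∈ S, Nonempty (PreservesFilteredColimits (coyoneda.obj (op P))))
    (hdual : ∀ P ∈ S, Nonempty (HasRightDual P))
    (hihom : ∀ P ∈ S, ∀ X : ModuleCat R,
      Nonempty (F.obj ((ihom P).obj X) ≅ (ihom (F.obj P)).obj (F.obj X)))
    (hunit : ∀ P ∈ S, ∀ X : ModuleCat R,
      Function.Bijective
        (fun f : (𝟙_ (ModuleCat R) ⟶ (ihom P).obj X) => F.map f)) :
    ∀ X Y : ModuleCat R, FinColimClosure S X → FinColimClosure S Y →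
      Function.Bijective (fun f : (X ⟶ Y) => F.map f) := by
  have key : ∀ X : ModuleCat R, FinColimClosure S X →
      ∀ Y : ModuleCat R, Function.Bijective (fun f : (X ⟶ Y) => F.map f) := by
    intro X hX
    induction hX with
    | of P hP =>
      intro Y
      haveI : HasRightDual P := (hdual P hP).some
      exact Stmt14.bij_of_unit F P (Pᘁ) Y ((ihom P).obj Y)
        ((Stmt14.ihomIsoTensor P (Pᘁ)).app Y) (hunit P hP Y)
    | colim J K c hc hmem ih =>
      intro Y
      haveI : PreservesColimitsOfSize.{0, 0} F :=
        preservesSmallestColimits_of_preservesColimits F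
      have hFc := isColimitOfPreserves F hc
      constructor
      · intro f g hfg
        simp only at hfg
        apply hc.hom_ext
        intro j
        apply (ih j Y).1
        simp only [F.map_comp, hfg]
      · intro h
        have hsurj := fun j : J => (ih j Y).2 (F.map (c.ι.app j) ≫ h)
        choose g hg using hsurj
        simp only at hg
        have hnat : ∀ {j j' : J} (m : j ⟶ j'), K.map m ≫ g j' = g j := by
          intro j j' m
          apply (ih j Y).1
          simp only [F.map_comp, hg, ← F.map_comp_assoc, c.w]
        refine ⟨hc.desc ⟨Y, fun j => g j, by intro j j' m; simpa using hnat m⟩, ?_⟩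
        simp only
        apply hFc.hom_ext
        intro j
        simp only [Functor.mapCocone_ι_app, ← F.map_comp, hc.fac]
        exact hg j
  intro X Y hX _
  exact key X hX Y
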